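/- Let M₁ and M₂ be finite automata over Σ recognizing languages Init and Bad, τ a finite length-preserving transducer over Σ, and Φ their first-order encoding. If w ∈ r_τ*(Init), i.e. w is reachable from some word of Init = L(M₁) by finitely many applications of the transducer relation r_τ, then R(t_w) is a semantic consequence of Φ. -/

import Mathlib

/-- A finite automaton over the alphabet `A`: a finite state set, a set of
transitions, an initial state and a set of final states. -/
structure FA (A : Type) : Type 1 where
  State : Type
  fin : Finite State
  delta : Set (State × A × State)
  start : State
  final : Set State

/-- The extended transition relation `q →^w q'` of a finite automaton: the
least relation containing `q →^ε q`, the one-letter transitions, and closed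
under appending a letter. -/
inductive FA.Ext {A : Type} (M : FA A) : M.State → List A → M.State → Prop
  | refl (q : M.State) : FA.Ext M q [] q
  | step {q : M.State} {w : List A} {q' : M.State} {a : A} {q'' : M.State} :
      FA.Ext M q w q' → (q', a, q'') ∈ M.delta → FA.Ext M q (w ++ [a]) q''

/-- The language recognized by a finite automaton:
`L(M) = {w | ∃ q' ∈ F, q₀ →^w q'}`. -/
def FA.lang {A : Type} (M : FA A) : Set (List A) :=
  {w | ∃ q ∈ M.final, M.Ext M.start w q}

/-- A finite length-preserving transducer over the alphabet `A`. -/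
structure FT (A : Type) : Type 1 where
  State : Type
  fin : Finite State
  delta : Set (State × A × A × State)
  start : State
  final : Set State

/-- The extended transition relation `q →^{w,u} q'` of a transducer: the least
relation containing `q →^{ε,ε} q`, the one-letter transitions, and closed under
appending a pair of letters. -/
inductive FT.Ext {A : Type} (t : FT A) :
    t.State → List A → List A → t.State → Prop
  | refl (q : t.State) : FT.Ext t q [] [] q
  | step {q : t.State} {w u : List A} {q' : t.State} {a b : A} {q'' : t.State} :
      FT.Ext t q w u q' → (q', a, b, q'') ∈ t.delta →
      FT.Ext t q (w ++ [a]) (u ++ [b]) q''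

/-- The relation `r_τ = {⟨w,u⟩ | ∃ q' ∈ F, q₀ →^{w,u} q'}` induced by a
transducer. -/
def FT.rel {A : Type} (t : FT A) (w u : List A) : Prop :=
  ∃ q ∈ t.final, t.Ext t.start w u q

/-- Interpretation `[t_w]` of the closed term `t_w = s₁ * ⋯ * sₙ` (with
`t_ε = e`) in a structure with domain `D`. -/
def wordVal {A D : Type} (mul : D → D → D) (e : D) (ca : A → D) : List A → D
  | [] => e
  | [a] => ca a
  | a :: b :: rest => mul (ca a) (wordVal mul e ca (b :: rest))

/-- A first-order structure (domain `D`, binary operation `mul`, constants `e`,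
`ca a` for letters, `c1 q`, `c2 q`, `ct q` for automata/transducer states, and
predicates `RR`, `InitP`, `BadP`, `TransP`, `T3`, `T4`) satisfies all formulas
of the encoding `Φ` of the automata `M1`, `M2` and the transducer `t`. -/
def SatRMC {A : Type} (M1 M2 : FA A) (t : FT A) {D : Type}
    (mul : D → D → D) (e : D) (ca : A → D)
    (c1 : M1.State → D) (c2 : M2.State → D) (ct : t.State → D)
    (RR InitP BadP : D → Prop) (TransP : D → D → Prop)
    (T3 : D → D → D → Prop) (T4 : D → D → D → D → Prop) : Prop :=
  -- (1) associativity
  (∀ x y z : D, mul (mul x y) z = mul x (mul y z)) ∧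
  -- (2) T³(q, e, q) for all q ∈ Q₁ ∪ Q₂
  (∀ q : M1.State, T3 (c1 q) e (c1 q)) ∧
  (∀ q : M2.State, T3 (c2 q) e (c2 q)) ∧
  -- (3) T³(q, a, q') for all (q, a, q') ∈ δ₁ ∪ δ₂
  (∀ q a q', (q, a, q') ∈ M1.delta → T3 (c1 q) (ca a) (c1 q')) ∧
  (∀ q a q', (q, a, q') ∈ M2.delta → T3 (c2 q) (ca a) (c2 q')) ∧
  -- (4)
  (∀ x y z v w : D, T3 x y z → T3 z v w → T3 x (mul y v) w) ∧
  -- (5)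
  (∀ x : D, (∃ q ∈ M1.final, T3 (c1 M1.start) x (c1 q)) → InitP x) ∧
  -- (6)
  (∀ x : D, (∃ q ∈ M2.final, T3 (c2 M2.start) x (c2 q)) → BadP x) ∧
  -- (7)
  (∀ x : D, T4 x e e x) ∧
  -- (8)
  (∀ q a b q', (q, a, b, q') ∈ t.delta → T4 (ct q) (ca a) (ca b) (ct q')) ∧
  -- (9)
  (∀ x y z v y' z' w : D,
      T4 x y z v → T4 v y' z' w → T4 x (mul y y') (mul z z') w) ∧
  -- (10)
  (∀ x y : D, TransP x y ↔ ∃ q ∈ t.final, T4 (ct t.start) x y (ct q)) ∧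
  -- (11)
  (∀ x : D, InitP x → RR x) ∧
  -- (12)
  (∀ x y : D, RR x → TransP x y → RR y)

/-!
Induction on runs shows that the encoding is sound for them: `q →^w q'` in `M₁` gives
`T³(q, t_w, q')`, and `q →^{w,u} q'` in `τ` gives `T⁴(q, t_w, t_u, q')`. Hence every word
of `L(M₁)` satisfies `Init` and so `R`, and every `r_τ`-step satisfies `Trans`, along
which `R` propagates by (12).
-/

theorem wordVal_append_singleton {A D : Type} (mul : D → D → D) (e : D) (ca : A → D)
    (hassoc : ∀ x y z : D, mul (mul x y) z = mul x (mul y z))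
    {w : List A} (hw : w ≠ []) (a : A) :
    wordVal mul e ca (w ++ [a]) = mul (wordVal mul e ca w) (ca a) := by
  induction w with
  | nil => exact absurd rfl hw
  | cons x xs ih =>
    cases xs with
    | nil => rfl
    | cons y ys =>
      simp only [List.cons_append, wordVal] at ih ⊢
      rw [ih (List.cons_ne_nil _ _), hassoc]

theorem FA.Ext.eq_of_nil {A : Type} {M : FA A} {q q' : M.State} (h : M.Ext q [] q') :
    q = q' := by
  generalize hw : ([] : List A) = w at h
  cases h with
  | refl => rfl
  | step _ _ => simp at hw

theorem FT.Ext.length_eq {A : Type} {t : FT A} {q q' : t.State} {w u : List A}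
    (h : t.Ext q w u q') : w.length = u.length := by
  induction h with
  | refl => rfl
  | step _ _ ih => simp [ih]

theorem FT.Ext.eq_nil_iff {A : Type} {t : FT A} {q q' : t.State} {w u : List A}
    (h : t.Ext q w u q') : w = [] ↔ u = [] := by
  rw [← List.length_eq_zero_iff, h.length_eq, List.length_eq_zero_iff]

theorem FT.Ext.eq_of_nil {A : Type} {t : FT A} {q q' : t.State} {u : List A}
    (h : t.Ext q [] u q') : q = q' := by
  generalize hw : ([] : List A) = w at h
  cases h with
  | refl => rfl
  | step _ _ => simp at hw

section Soundness

variable {A D : Type} {mul : D → D → D} {e : D} {ca : A → D}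

theorem FA.Ext.sound {M : FA A} {c : M.State → D} {T3 : D → D → D → Prop}
    (hassoc : ∀ x y z : D, mul (mul x y) z = mul x (mul y z))
    (hrefl : ∀ q, T3 (c q) e (c q))
    (hdelta : ∀ q a q', (q, a, q') ∈ M.delta → T3 (c q) (ca a) (c q'))
    (hcomp : ∀ x y z v w : D, T3 x y z → T3 z v w → T3 x (mul y v) w)
    {q q' : M.State} {w : List A} (h : M.Ext q w q') :
    T3 (c q) (wordVal mul e ca w) (c q') := by
  induction h with
  | refl => exact hrefl _
  | @step w _ a _ hrun hstep ih =>
    -- `e` need not be a unit for `mul`, so a run on a single letter is treated separately.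
    rcases eq_or_ne w [] with rfl | hw
    · rw [hrun.eq_of_nil]
      exact hdelta _ _ _ hstep
    · rw [wordVal_append_singleton mul e ca hassoc hw]
      exact hcomp _ _ _ _ _ ih (hdelta _ _ _ hstep)

theorem FT.Ext.sound {t : FT A} {c : t.State → D} {T4 : D → D → D → D → Prop}
    (hassoc : ∀ x y z : D, mul (mul x y) z = mul x (mul y z))
    (hrefl : ∀ x, T4 x e e x)
    (hdelta : ∀ q a b q', (q, a, b, q') ∈ t.delta → T4 (c q) (ca a) (ca b) (c q'))
    (hcomp : ∀ x y z v y' z' w : D, T4 x y z v → T4 v y' z' w → T4 x (mul y y') (mul z z') w)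
    {q q' : t.State} {w u : List A} (h : t.Ext q w u q') :
    T4 (c q) (wordVal mul e ca w) (wordVal mul e ca u) (c q') := by
  induction h with
  | refl => exact hrefl _
  | @step w u _ a b _ hrun hstep ih =>
    rcases eq_or_ne w [] with rfl | hw
    · obtain rfl : u = [] := hrun.eq_nil_iff.mp rfl
      rw [hrun.eq_of_nil]
      exact hdelta _ _ _ _ hstep
    · have hu : u ≠ [] := mt hrun.eq_nil_iff.mpr hw
      rw [wordVal_append_singleton mul e ca hassoc hw, wordVal_append_singleton mul e ca hassoc hu]
      exact hcomp _ _ _ _ _ _ _ ih (hdelta _ _ _ _ hstep)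

end Soundness

theorem reach_adequacy_general {A : Type} (M1 M2 : FA A) (t : FT A)
    (w : List A) (hw : ∃ w0 ∈ M1.lang, Relation.ReflTransGen t.rel w0 w)
    (D : Type) (mul : D → D → D) (e : D) (ca : A → D)
    (c1 : M1.State → D) (c2 : M2.State → D) (ct : t.State → D)
    (RR InitP BadP : D → Prop) (TransP : D → D → Prop)
    (T3 : D → D → D → Prop) (T4 : D → D → D → D → Prop)
    (hPhi : SatRMC M1 M2 t mul e ca c1 c2 ct RR InitP BadP TransP T3 T4) :
    RR (wordVal mul e ca w) := by
  obtain ⟨hassoc, hT3refl, -, hT3delta, -, hT3comp, hInit, -, hT4refl, hT4delta, hT4comp,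
    hTrans, hInitR, hTransR⟩ := hPhi
  obtain ⟨w0, ⟨q, hq, hrun⟩, hreach⟩ := hw
  induction hreach with
  | refl => exact hInitR _ (hInit _ ⟨q, hq, hrun.sound hassoc hT3refl hT3delta hT3comp⟩)
  | tail _ hstep ih =>
    obtain ⟨q', hq', hrun'⟩ := hstep
    exact hTransR _ _ ih ((hTrans _ _).mpr
      ⟨q', hq', hrun'.sound hassoc hT4refl hT4delta hT4comp⟩)

/-- adequacy of the encoding: if `w ∈ r_τ*(Init)`, i.e. `w`
is reachable from some word of `L(M₁)` by finitely many applications of the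
transducer relation `r_τ`, then `R(t_w)` holds in every first-order structure
satisfying all formulas of `Φ`. -/
theorem reach_adequacy {A : Type} [Finite A] (M1 M2 : FA A) (t : FT A)
    (w : List A) (hw : ∃ w0 ∈ M1.lang, Relation.ReflTransGen t.rel w0 w)
    (D : Type) (mul : D → D → D) (e : D) (ca : A → D)
    (c1 : M1.State → D) (c2 : M2.State → D) (ct : t.State → D)
    (RR InitP BadP : D → Prop) (TransP : D → D → Prop)
    (T3 : D → D → D → Prop) (T4 : D → D → D → D → Prop)
    (hPhi : SatRMC M1 M2 t mul e ca c1 c2 ct RR InitP BadP TransP T3 T4) :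
    RR (wordVal mul e ca w) :=
  reach_adequacy_general M1 M2 t w hw D mul e ca c1 c2 ct RR InitP BadP TransP T3 T4 hPhi
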